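/- arXiv:1307.5090 — 4 statements merged into one kernel-verified Lean document; each statement's English description precedes it below -/
import Mathlib

section
/- Let (Ω,μ) be a finite probability space in which every atom has positive probability and the minimum atom probability is α ≤ 1/2. Then for every γ ∈ (0,1) there exists δ > 0, depending only on γ and α, such that for every n ≥ 1 and every f : Ω^n → ℝ, ‖T_{1−γ} f‖_{2+δ} ≤ ‖f‖_2. -/
open Finset

noncomputable section
namespace OCSPPaper

/-- Weight of a point of the product space `Ω^n` under `μ^{⊗n}`. -/
noncomputable def prodW {Ω : Type} [Fintype Ω] (μ : Ω → ℝ) {n : ℕ} (x : Fin n → Ω) : ℝ :=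
  ∏ i, μ (x i)

/-- The `ℓ_p` norm of `f : Ω^n → ℝ` with respect to the product measure `μ^{⊗n}`. -/
noncomputable def lpNormW {Ω : Type} [Fintype Ω] (μ : Ω → ℝ) {n : ℕ} (p : ℝ)
    (f : (Fin n → Ω) → ℝ) : ℝ :=
  (∑ x : Fin n → Ω, prodW μ x * |f x| ^ p) ^ (1 / p)

/-- Single-coordinate noise kernel: keep the value with probability `ρ`, otherwise take a
fresh sample from `μ`. -/
noncomputable def noiseK {Ω : Type} [DecidableEq Ω] (μ : Ω → ℝ) (ρ : ℝ) (a b : Ω) : ℝ :=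
  (if b = a then ρ else 0) + (1 - ρ) * μ b

/-- The noise operator `T_ρ`: `(T_ρ f)(x) = E[f(y)]`, where each coordinate `y_i` equals
`x_i` with probability `ρ` and is a fresh independent sample from `μ` otherwise. -/
noncomputable def noiseOp {Ω : Type} [Fintype Ω] [DecidableEq Ω] (μ : Ω → ℝ) (ρ : ℝ) {n : ℕ}
    (f : (Fin n → Ω) → ℝ) : (Fin n → Ω) → ℝ :=
  fun x => ∑ y : Fin n → Ω, (∏ i, noiseK μ ρ (x i) (y i)) * f y

/-!
Both sides tensorize: the noise operator is the `n`-fold product of the one-coordinate operator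
`v ↦ m + ρ (v - m)` (`ρ = 1 - γ`, `m` the mean of `v`), and Minkowski's inequality in `L^{q/2}`
reduces the bound `‖T_ρ f‖_q ≤ ‖f‖_2` (with `q = 2 + δ`) to a single coordinate.

There, write `h = v - m`, `σ² = E h²` and `t = m² + σ² = ‖v‖₂²`; every atom has mass `≥ α`, so
`α h² ≤ σ²` pointwise. If `4σ² < α m²`, then `|h| ≤ |m|/2` and a second-order expansion of
`|m + ρh|^q` in `h/m` works: the first-order term has mean zero and the second-order one carries
`ρ²`, which absorbs the loss from `δ`. Otherwise `σ² ≥ α t / 5`, so the noise shrinks the second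
moment to at most `(1 - γα/5) t`, while `(m + ρh)² ≤ 2t/α` pointwise makes the extra factor
`|m + ρh|^δ` cost at most `(2/α)^{δ/2} ≤ 1 + γα/5` once `δ = γα²/5`.
-/

section Elementary

lemma abs_rpow_eq_sq_rpow_half (x δ : ℝ) : |x| ^ δ = (x ^ 2) ^ (δ / 2) := by
  rw [← sq_abs, ← Real.rpow_natCast_mul (abs_nonneg x)]
  congr 1
  ring

lemma one_add_rpow_two_add_le {u δ : ℝ} (hu₀ : -1 ≤ u) (hu₁ : u ≤ 1 / 2) (hδ₀ : 0 ≤ δ)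
    (hδ₁ : δ ≤ 1) : (1 + u) ^ (2 + δ) ≤ 1 + (2 + δ) * u + (1 + 5 * δ / 2) * u ^ 2 := by
  rw [Real.rpow_add' (by linarith) (by linarith), Real.rpow_two]
  calc (1 + u) ^ 2 * (1 + u) ^ δ ≤ (1 + u) ^ 2 * (1 + δ * u) := by
        gcongr
        exact rpow_one_add_le_one_add_mul_self hu₀ hδ₀ hδ₁
    _ ≤ _ := by nlinarith [mul_nonneg (mul_nonneg hδ₀ (sq_nonneg u)) (sub_nonneg.2 hu₁)]

lemma abs_add_rpow_two_add_le {m z δ : ℝ} (hm : m ≠ 0) (hz : |z| ≤ |m| / 2) (hδ₀ : 0 ≤ δ)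
    (hδ₁ : δ ≤ 1) :
    |m + z| ^ (2 + δ) ≤ |m| ^ δ * (m ^ 2 + (2 + δ) * m * z + (1 + 5 * δ / 2) * z ^ 2) := by
  have hu : |z / m| ≤ 1 / 2 := by
    rw [abs_div, div_le_iff₀ (abs_pos.2 hm)]
    linarith
  have hu₀ := neg_abs_le (z / m)
  have hu₁ := le_abs_self (z / m)
  have hsplit : |m + z| = |m| * (1 + z / m) := by
    rw [← abs_of_nonneg (show 0 ≤ 1 + z / m by linarith), ← abs_mul, mul_add, mul_one,
      mul_div_cancel₀ _ hm]
  rw [hsplit, Real.mul_rpow (abs_nonneg m) (by linarith),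
    Real.rpow_add' (abs_nonneg m) (by linarith), Real.rpow_two, sq_abs]
  calc m ^ 2 * |m| ^ δ * (1 + z / m) ^ (2 + δ)
      ≤ m ^ 2 * |m| ^ δ * (1 + (2 + δ) * (z / m) + (1 + 5 * δ / 2) * (z / m) ^ 2) := by
        gcongr
        exact one_add_rpow_two_add_le (by linarith) (by linarith) hδ₀ hδ₁
    _ = _ := by field_simp

lemma rpow_two_add_div_two {t δ : ℝ} (ht : 0 ≤ t) (hδ : 0 ≤ δ) :
    t ^ ((2 + δ) / 2) = t * t ^ (δ / 2) := by
  rw [show (2 + δ) / 2 = 1 + δ / 2 by ring, Real.rpow_one_add' ht (by positivity)]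

lemma two_div_rpow_half_le {α δ : ℝ} (hα : 0 < α) (hδ₀ : 0 ≤ δ) (hδ₂ : δ ≤ 2) :
    (2 / α) ^ (δ / 2) ≤ 1 + δ / α := by
  have hbern := rpow_one_add_le_one_add_mul_self (s := 2 / α - 1)
    (by linarith [div_pos two_pos hα]) (p := δ / 2) (by positivity) (by linarith)
  rw [add_sub_cancel] at hbern
  refine hbern.trans ?_
  have hsplit : δ / 2 * (2 / α - 1) = δ / α - δ / 2 := by field_simp
  linarith

lemma abs_rpow_two_add_le_of_sq_le {x B δ : ℝ} (hx : x ^ 2 ≤ B) (hδ : 0 ≤ δ) :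
    |x| ^ (2 + δ) ≤ B ^ (δ / 2) * x ^ 2 := by
  rw [Real.rpow_add' (abs_nonneg x) (by linarith), Real.rpow_two, sq_abs, mul_comm,
    abs_rpow_eq_sq_rpow_half]
  gcongr

end Elementary

section OneCoordinate

variable {Ω : Type} [Fintype Ω] {μ : Ω → ℝ}

lemma sum_mul_quadratic {h : Ω → ℝ} (hμ : ∑ a, μ a = 1) (hh : ∑ a, μ a * h a = 0)
    (A B C : ℝ) :
    ∑ a, μ a * (A + B * h a + C * h a ^ 2) = A + C * ∑ a, μ a * h a ^ 2 := by
  have hexpand : ∀ a, μ a * (A + B * h a + C * h a ^ 2)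
      = A * μ a + B * (μ a * h a) + C * (μ a * h a ^ 2) := fun a => by ring
  simp only [hexpand, sum_add_distrib, ← mul_sum, hμ, hh]
  ring

lemma sum_mul_abs_add_rpow_le_of_abs_le_half {z : Ω → ℝ} {m δ : ℝ} (hμ₀ : ∀ a, 0 ≤ μ a)
    (hμ : ∑ a, μ a = 1) (hz : ∑ a, μ a * z a = 0) (hm : m ≠ 0) (hsmall : ∀ a, |z a| ≤ |m| / 2)
    (hδ₀ : 0 ≤ δ) (hδ₁ : δ ≤ 1) :
    ∑ a, μ a * |m + z a| ^ (2 + δ)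
      ≤ |m| ^ δ * (m ^ 2 + (1 + 5 * δ / 2) * ∑ a, μ a * z a ^ 2) := by
  calc ∑ a, μ a * |m + z a| ^ (2 + δ)
      ≤ ∑ a, μ a * (|m| ^ δ * (m ^ 2 + (2 + δ) * m * z a + (1 + 5 * δ / 2) * z a ^ 2)) :=
        sum_le_sum fun a _ => mul_le_mul_of_nonneg_left
          (abs_add_rpow_two_add_le hm (hsmall a) hδ₀ hδ₁) (hμ₀ a)
    _ = |m| ^ δ * ∑ a, μ a * (m ^ 2 + (2 + δ) * m * z a + (1 + 5 * δ / 2) * z a ^ 2) := by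
        rw [mul_sum]
        exact sum_congr rfl fun a _ => by ring
    _ = _ := by rw [sum_mul_quadratic hμ hz]

lemma sum_mul_abs_rpow_le_of_sq_le {x : Ω → ℝ} {B δ : ℝ} (hμ₀ : ∀ a, 0 ≤ μ a)
    (hx : ∀ a, x a ^ 2 ≤ B) (hδ : 0 ≤ δ) :
    ∑ a, μ a * |x a| ^ (2 + δ) ≤ B ^ (δ / 2) * ∑ a, μ a * x a ^ 2 := by
  rw [mul_sum]
  refine sum_le_sum fun a _ => ?_
  calc μ a * |x a| ^ (2 + δ) ≤ μ a * (B ^ (δ / 2) * x a ^ 2) :=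
        mul_le_mul_of_nonneg_left (abs_rpow_two_add_le_of_sq_le (hx a) hδ) (hμ₀ a)
    _ = B ^ (δ / 2) * (μ a * x a ^ 2) := by ring

lemma sum_mul_abs_add_noise_rpow_le_of_concentrated {h : Ω → ℝ} {α γ δ m : ℝ} (hα₀ : 0 < α)
    (hμ₀ : ∀ a, 0 ≤ μ a) (hμ : ∑ a, μ a = 1) (hh : ∑ a, μ a * h a = 0)
    (hatom : ∀ a, α * h a ^ 2 ≤ ∑ b, μ b * h b ^ 2) (hconc : 4 * ∑ a, μ a * h a ^ 2 < α * m ^ 2)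
    (hγ₀ : 0 < γ) (hγ₁ : γ < 1) (hδ₀ : 0 ≤ δ) (hδ₁ : δ ≤ 1) (hδγ : 5 * δ ≤ 2 * γ) :
    ∑ a, μ a * |m + (1 - γ) * h a| ^ (2 + δ)
      ≤ (m ^ 2 + ∑ a, μ a * h a ^ 2) ^ ((2 + δ) / 2) := by
  set σ2 := ∑ a, μ a * h a ^ 2
  set t := m ^ 2 + σ2
  have hσ2₀ : 0 ≤ σ2 := sum_nonneg fun a _ => mul_nonneg (hμ₀ a) (sq_nonneg _)
  have hm : m ≠ 0 := by
    rintro rfl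
    linarith
  have hsmall : ∀ a, |(1 - γ) * h a| ≤ |m| / 2 := fun a => by
    have hh2 : h a ^ 2 ≤ (m / 2) ^ 2 := by nlinarith [hatom a]
    rw [abs_mul, abs_of_pos (by linarith : 0 < 1 - γ), ← abs_two, ← abs_div]
    exact (mul_le_of_le_one_left (abs_nonneg _) (by linarith)).trans (sq_le_sq.1 hh2)
  have hnoise : ∑ a, μ a * ((1 - γ) * h a) ^ 2 = (1 - γ) ^ 2 * σ2 := by
    rw [mul_sum]
    exact sum_congr rfl fun a _ => by ring
  have hcoef : (1 + 5 * δ / 2) * (1 - γ) ^ 2 ≤ 1 :=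
    calc (1 + 5 * δ / 2) * (1 - γ) ^ 2 ≤ (1 + γ) * (1 - γ) ^ 2 := by gcongr; linarith
      _ ≤ 1 := by nlinarith [mul_pos hγ₀ hγ₀, mul_pos (mul_pos hγ₀ hγ₀) (sub_pos.2 hγ₁)]
  have hmδ : |m| ^ δ ≤ t ^ (δ / 2) := by
    rw [abs_rpow_eq_sq_rpow_half]
    gcongr
    linarith
  rw [rpow_two_add_div_two (by positivity) hδ₀]
  calc ∑ a, μ a * |m + (1 - γ) * h a| ^ (2 + δ)
      ≤ |m| ^ δ * (m ^ 2 + (1 + 5 * δ / 2) * ((1 - γ) ^ 2 * σ2)) := by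
        rw [← hnoise]
        refine sum_mul_abs_add_rpow_le_of_abs_le_half hμ₀ hμ ?_ hm hsmall hδ₀ hδ₁
        simp only [mul_left_comm _ (1 - γ), ← mul_sum, hh, mul_zero]
    _ ≤ t ^ (δ / 2) * t := by
        gcongr
        nlinarith [mul_le_mul_of_nonneg_right hcoef hσ2₀]
    _ = t * t ^ (δ / 2) := mul_comm _ _

lemma sum_mul_abs_add_noise_rpow_le_of_spread {h : Ω → ℝ} {α γ δ m : ℝ} (hα₀ : 0 < α)
    (hα₁ : α ≤ 1) (hμ₀ : ∀ a, 0 ≤ μ a) (hμ : ∑ a, μ a = 1) (hh : ∑ a, μ a * h a = 0)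
    (hatom : ∀ a, α * h a ^ 2 ≤ ∑ b, μ b * h b ^ 2)
    (hspread : α * m ^ 2 ≤ 4 * ∑ a, μ a * h a ^ 2) (hγ₀ : 0 < γ) (hγ₁ : γ < 1) (hδ₀ : 0 ≤ δ)
    (hδ : δ ≤ γ * α ^ 2 / 5) :
    ∑ a, μ a * |m + (1 - γ) * h a| ^ (2 + δ)
      ≤ (m ^ 2 + ∑ a, μ a * h a ^ 2) ^ ((2 + δ) / 2) := by
  set σ2 := ∑ a, μ a * h a ^ 2
  set t := m ^ 2 + σ2 with ht_def
  have hσ2₀ : 0 ≤ σ2 := sum_nonneg fun a _ => mul_nonneg (hμ₀ a) (sq_nonneg _)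
  have ht : 0 ≤ t := by positivity
  set c := γ * α / 5 with hc
  have hbound : ∀ a, (m + (1 - γ) * h a) ^ 2 ≤ 2 / α * t := fun a => by
    have hρ2 : (1 - γ) ^ 2 ≤ 1 := by nlinarith
    have h2 : (m + (1 - γ) * h a) ^ 2 ≤ 2 * m ^ 2 + 2 * h a ^ 2 := by
      nlinarith [sq_nonneg (m - (1 - γ) * h a), mul_le_mul_of_nonneg_right hρ2 (sq_nonneg (h a))]
    rw [div_mul_eq_mul_div, le_div_iff₀ hα₀]
    nlinarith [hatom a, sq_nonneg m]
  have hgrowth : (2 / α) ^ (δ / 2) ≤ 1 + c := by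
    refine (two_div_rpow_half_le hα₀ hδ₀ (by nlinarith)).trans ?_
    rw [add_le_add_iff_left, div_le_iff₀ hα₀, hc]
    linarith
  have hdecay : m ^ 2 + (1 - γ) ^ 2 * σ2 ≤ (1 - c) * t := by
    have hvar : α * t ≤ 5 * σ2 := by nlinarith [mul_le_mul_of_nonneg_right hα₁ hσ2₀]
    have hct : c * t ≤ γ * σ2 := by
      rw [hc]
      nlinarith [mul_le_mul_of_nonneg_left hvar hγ₀.le]
    nlinarith [mul_nonneg (mul_nonneg hγ₀.le (sub_nonneg.2 hγ₁.le)) hσ2₀]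
  have hsq : ∑ a, μ a * (m + (1 - γ) * h a) ^ 2 = m ^ 2 + (1 - γ) ^ 2 * σ2 :=
    (sum_congr rfl fun a _ => by ring).trans
      (sum_mul_quadratic hμ hh (m ^ 2) (2 * m * (1 - γ)) ((1 - γ) ^ 2))
  rw [rpow_two_add_div_two ht hδ₀]
  calc ∑ a, μ a * |m + (1 - γ) * h a| ^ (2 + δ)
      ≤ (2 / α * t) ^ (δ / 2) * ∑ a, μ a * (m + (1 - γ) * h a) ^ 2 :=
        sum_mul_abs_rpow_le_of_sq_le hμ₀ hbound hδ₀
    _ = (2 / α) ^ (δ / 2) * (m ^ 2 + (1 - γ) ^ 2 * σ2) * t ^ (δ / 2) := by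
        rw [Real.mul_rpow (by positivity) ht, hsq]
        ring
    _ ≤ ((1 + c) * ((1 - c) * t)) * t ^ (δ / 2) := by gcongr
    _ ≤ t * t ^ (δ / 2) := by
        gcongr
        nlinarith [mul_nonneg (sq_nonneg c) ht]

theorem sum_mul_abs_add_noise_rpow_le {h : Ω → ℝ} {α γ δ m : ℝ} (hα₀ : 0 < α) (hα₁ : α ≤ 1)
    (hμα : ∀ a, α ≤ μ a) (hμ : ∑ a, μ a = 1) (hh : ∑ a, μ a * h a = 0) (hγ₀ : 0 < γ)
    (hγ₁ : γ < 1) (hδ₀ : 0 ≤ δ) (hδ : δ ≤ γ * α ^ 2 / 5) :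
    ∑ a, μ a * |m + (1 - γ) * h a| ^ (2 + δ)
      ≤ (m ^ 2 + ∑ a, μ a * h a ^ 2) ^ ((2 + δ) / 2) := by
  have hμ₀ : ∀ a, 0 ≤ μ a := fun a => hα₀.le.trans (hμα a)
  have hatom : ∀ a, α * h a ^ 2 ≤ ∑ b, μ b * h b ^ 2 := fun a =>
    (mul_le_mul_of_nonneg_right (hμα a) (sq_nonneg _)).trans
      (single_le_sum (f := fun b => μ b * h b ^ 2)
        (fun b _ => mul_nonneg (hμ₀ b) (sq_nonneg _)) (mem_univ a))
  have hγα : γ * α ^ 2 ≤ γ := mul_le_of_le_one_right hγ₀.le (pow_le_one₀ hα₀.le hα₁)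
  rcases le_or_gt (α * m ^ 2) (4 * ∑ a, μ a * h a ^ 2) with hspread | hconc
  · exact sum_mul_abs_add_noise_rpow_le_of_spread hα₀ hα₁ hμ₀ hμ hh hatom hspread hγ₀ hγ₁ hδ₀ hδ
  · exact sum_mul_abs_add_noise_rpow_le_of_concentrated hα₀ hμ₀ hμ hh hatom hconc hγ₀ hγ₁ hδ₀
      (by linarith) (by linarith)

end OneCoordinate

section Tensorization

variable {Ω : Type} [Fintype Ω]

def Hypercontractive (μ : Ω → ℝ) (K : Ω → Ω → ℝ) (q : ℝ) : Prop :=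
  ∀ v : Ω → ℝ, ∑ a, μ a * |∑ b, K a b * v b| ^ q ≤ (∑ a, μ a * v a ^ 2) ^ (q / 2)

def prodKernelOp (K : Ω → Ω → ℝ) {n : ℕ} (f : (Fin n → Ω) → ℝ) : (Fin n → Ω) → ℝ :=
  fun x => ∑ y : Fin n → Ω, (∏ i, K (x i) (y i)) * f y

lemma sum_fin_succ_pi {M : Type*} [AddCommMonoid M] {n : ℕ} (F : (Fin (n + 1) → Ω) → M) :
    ∑ x, F x = ∑ a, ∑ y : Fin n → Ω, F (Fin.cons a y) := by
  rw [← (Fin.consEquiv fun _ => Ω).sum_comp, Fintype.sum_prod_type]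
  rfl

lemma prodW_cons {n : ℕ} (μ : Ω → ℝ) (a : Ω) (y : Fin n → Ω) :
    prodW μ (Fin.cons a y : Fin (n + 1) → Ω) = μ a * prodW μ y := by
  simp [prodW, Fin.prod_univ_succ]

lemma prodKernelOp_cons {n : ℕ} (K : Ω → Ω → ℝ) (f : (Fin (n + 1) → Ω) → ℝ) (a : Ω)
    (x : Fin n → Ω) :
    prodKernelOp K f (Fin.cons a x)
      = ∑ b, K a b * prodKernelOp K (fun y => f (Fin.cons b y)) x := by
  simp only [prodKernelOp, sum_fin_succ_pi, mul_sum, Fin.prod_univ_succ, Fin.cons_zero,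
    Fin.cons_succ, mul_assoc]

lemma prodKernelOp_fin_zero (K : Ω → Ω → ℝ) (f : (Fin 0 → Ω) → ℝ) : prodKernelOp K f = f := by
  funext x
  simp [prodKernelOp, Subsingleton.elim x default]

variable {μ : Ω → ℝ} {n : ℕ} {p : ℝ}

lemma prodW_nonneg (hμ : ∀ a, 0 ≤ μ a) (x : Fin n → Ω) : 0 ≤ prodW μ x :=
  prod_nonneg fun i _ => hμ (x i)

lemma sum_prodW_mul_nonneg (hμ : ∀ a, 0 ≤ μ a) (f : (Fin n → Ω) → ℝ) :
    0 ≤ ∑ x, prodW μ x * |f x| ^ p :=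
  sum_nonneg fun x _ => mul_nonneg (prodW_nonneg hμ x) (Real.rpow_nonneg (abs_nonneg _) _)

lemma lpNormW_nonneg (hμ : ∀ a, 0 ≤ μ a) (f : (Fin n → Ω) → ℝ) : 0 ≤ lpNormW μ p f :=
  Real.rpow_nonneg (sum_prodW_mul_nonneg hμ f) _

lemma lpNormW_rpow (hμ : ∀ a, 0 ≤ μ a) (hp : p ≠ 0) (f : (Fin n → Ω) → ℝ) :
    lpNormW μ p f ^ p = ∑ x, prodW μ x * |f x| ^ p := by
  rw [lpNormW, one_div, Real.rpow_inv_rpow (sum_prodW_mul_nonneg hμ f) hp]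

lemma lpNormW_two_sq (hμ : ∀ a, 0 ≤ μ a) (f : (Fin n → Ω) → ℝ) :
    lpNormW μ 2 f ^ 2 = ∑ x, prodW μ x * f x ^ 2 := by
  rw [← Real.rpow_two, lpNormW_rpow hμ two_ne_zero]
  simp only [Real.rpow_two, sq_abs]

lemma lpNormW_fin_zero (hp : p ≠ 0) (f : (Fin 0 → Ω) → ℝ) : lpNormW μ p f = |f default| := by
  simp [lpNormW, prodW, Real.rpow_rpow_inv (abs_nonneg _) hp]

lemma lpNormW_const_mul (hμ : ∀ a, 0 ≤ μ a) (hp : p ≠ 0) {c : ℝ} (hc : 0 ≤ c)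
    (f : (Fin n → Ω) → ℝ) : lpNormW μ p (fun x => c * f x) = c * lpNormW μ p f := by
  have hterm : ∀ x, prodW μ x * |c * f x| ^ p = c ^ p * (prodW μ x * |f x| ^ p) := fun x => by
    rw [abs_mul, abs_of_nonneg hc, Real.mul_rpow hc (abs_nonneg _)]
    ring
  rw [lpNormW, lpNormW, Finset.sum_congr rfl fun x _ => hterm x, ← mul_sum,
    Real.mul_rpow (Real.rpow_nonneg hc _) (sum_prodW_mul_nonneg hμ f), one_div,
    Real.rpow_rpow_inv hc hp]

lemma lpNormW_sq (hμ : ∀ a, 0 ≤ μ a) (hp : p ≠ 0) (f : (Fin n → Ω) → ℝ) :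
    lpNormW μ p (fun x => f x ^ 2) = lpNormW μ (2 * p) f ^ 2 := by
  have hterm : ∀ x, |f x ^ 2| ^ p = |f x| ^ (2 * p) := fun x => by
    rw [abs_pow, ← Real.rpow_natCast, ← Real.rpow_mul (abs_nonneg _)]
    norm_num
  rw [lpNormW, lpNormW, ← Real.rpow_mul_natCast (sum_prodW_mul_nonneg hμ f)]
  simp only [hterm]
  congr 1
  field_simp
  norm_num

lemma lpNormW_add_le (hμ : ∀ a, 0 ≤ μ a) (hp : 1 ≤ p) (f g : (Fin n → Ω) → ℝ) :
    lpNormW μ p (f + g) ≤ lpNormW μ p f + lpNormW μ p g := by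
  have hweight : ∀ (x : Fin n → Ω) (r : ℝ),
      |prodW μ x ^ (1 / p) * r| ^ p = prodW μ x * |r| ^ p := fun x r => by
    rw [abs_mul, abs_of_nonneg (Real.rpow_nonneg (prodW_nonneg hμ x) _),
      Real.mul_rpow (Real.rpow_nonneg (prodW_nonneg hμ x) _) (abs_nonneg _), one_div,
      Real.rpow_inv_rpow (prodW_nonneg hμ x) (by linarith)]
  have := Real.Lp_add_le univ (fun x => prodW μ x ^ (1 / p) * f x)
    (fun x => prodW μ x ^ (1 / p) * g x) hp
  simpa only [lpNormW, Pi.add_apply, ← mul_add, hweight] using this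

lemma lpNormW_sum_le (hμ : ∀ a, 0 ≤ μ a) (hp : 1 ≤ p) {ι : Type*} (s : Finset ι)
    (F : ι → (Fin n → Ω) → ℝ) :
    lpNormW μ p (fun x => ∑ i ∈ s, F i x) ≤ ∑ i ∈ s, lpNormW μ p (F i) := by
  have hzero : lpNormW μ p (0 : (Fin n → Ω) → ℝ) = 0 := by
    have hp0 : p ≠ 0 := by linarith
    simp [lpNormW, Real.zero_rpow hp0, Real.zero_rpow (inv_ne_zero hp0)]
  simpa only [← Finset.sum_apply] using
    le_sum_of_subadditive (lpNormW μ p) hzero.le (lpNormW_add_le hμ hp) s F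

lemma lpNormW_sum_mul_sq_le (hμ : ∀ a, 0 ≤ μ a) {q : ℝ} (hq : 2 ≤ q) {ι : Type*} (s : Finset ι)
    {w : ι → ℝ} (hw : ∀ i, 0 ≤ w i) (g : ι → (Fin n → Ω) → ℝ) :
    lpNormW μ (q / 2) (fun x => ∑ i ∈ s, w i * g i x ^ 2) ≤ ∑ i ∈ s, w i * lpNormW μ q (g i) ^ 2 :=
  calc lpNormW μ (q / 2) (fun x => ∑ i ∈ s, w i * g i x ^ 2)
      ≤ ∑ i ∈ s, lpNormW μ (q / 2) fun x => w i * g i x ^ 2 :=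
        lpNormW_sum_le hμ (by linarith) s _
    _ = ∑ i ∈ s, w i * lpNormW μ q (g i) ^ 2 := by
        refine sum_congr rfl fun i _ => ?_
        rw [lpNormW_const_mul hμ (by positivity) (hw i), lpNormW_sq hμ (by positivity),
          mul_div_cancel₀ q two_ne_zero]

theorem Hypercontractive.lpNormW_prodKernelOp_le {K : Ω → Ω → ℝ} {q : ℝ}
    (hK : Hypercontractive μ K q) (hμ : ∀ a, 0 ≤ μ a) (hq : 2 ≤ q) (f : (Fin n → Ω) → ℝ) :
    lpNormW μ q (prodKernelOp K f) ≤ lpNormW μ 2 f := by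
  have hq₀ : q ≠ 0 := by linarith
  induction n with
  | zero => rw [prodKernelOp_fin_zero, lpNormW_fin_zero hq₀, lpNormW_fin_zero two_ne_zero]
  | succ n ih =>
    set g : Ω → (Fin n → Ω) → ℝ := fun b => prodKernelOp K fun y => f (Fin.cons b y)
    set S : (Fin n → Ω) → ℝ := fun y => ∑ a, μ a * g a y ^ 2
    have hS₀ : ∀ y, 0 ≤ S y := fun y => sum_nonneg fun a _ => mul_nonneg (hμ a) (sq_nonneg _)
    have hcoord : lpNormW μ q (prodKernelOp K f) ^ q ≤ lpNormW μ (q / 2) S ^ (q / 2) := by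
      rw [lpNormW_rpow hμ hq₀, lpNormW_rpow hμ (by positivity), sum_fin_succ_pi, sum_comm]
      refine sum_le_sum fun y _ => ?_
      simp only [prodW_cons, prodKernelOp_cons, mul_assoc, mul_left_comm (μ _) (prodW μ y),
        ← mul_sum, abs_of_nonneg (hS₀ y)]
      exact mul_le_mul_of_nonneg_left (hK fun b => g b y) (prodW_nonneg hμ y)
    have hminkowski : lpNormW μ (q / 2) S ≤ lpNormW μ 2 f ^ 2 :=
      calc lpNormW μ (q / 2) S ≤ ∑ a, μ a * lpNormW μ q (g a) ^ 2 :=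
            lpNormW_sum_mul_sq_le hμ hq univ hμ g
        _ ≤ ∑ a, μ a * lpNormW μ 2 (fun y => f (Fin.cons a y)) ^ 2 := by
            gcongr with a
            · exact hμ a
            · exact lpNormW_nonneg hμ _
            · exact ih _
        _ = lpNormW μ 2 f ^ 2 := by
            simp only [lpNormW_two_sq hμ, sum_fin_succ_pi, prodW_cons, mul_sum, mul_assoc]
    rw [← Real.rpow_le_rpow_iff (lpNormW_nonneg hμ _) (lpNormW_nonneg hμ _) (by positivity : 0 < q)]
    calc lpNormW μ q (prodKernelOp K f) ^ q ≤ lpNormW μ (q / 2) S ^ (q / 2) := hcoord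
      _ ≤ (lpNormW μ 2 f ^ 2) ^ (q / 2) := by
          gcongr
          exact lpNormW_nonneg hμ _
      _ = lpNormW μ 2 f ^ q := by
          rw [← Real.rpow_natCast_mul (lpNormW_nonneg hμ _)]
          congr 1
          ring

end Tensorization

lemma sum_noiseK_mul {Ω : Type} [Fintype Ω] [DecidableEq Ω] (μ : Ω → ℝ) (ρ : ℝ) (v : Ω → ℝ)
    (a : Ω) :
    ∑ b, noiseK μ ρ a b * v b = (∑ b, μ b * v b) + ρ * (v a - ∑ b, μ b * v b) := by
  simp only [noiseK, add_mul, sum_add_distrib, ite_mul, zero_mul, sum_ite_eq', mem_univ,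
    if_true, mul_assoc, ← mul_sum]
  ring

theorem hypercontractive_noiseK {Ω : Type} [Fintype Ω] [DecidableEq Ω] {μ : Ω → ℝ}
    {α γ δ : ℝ} (hα₀ : 0 < α) (hα₁ : α ≤ 1) (hμα : ∀ a, α ≤ μ a) (hμ : ∑ a, μ a = 1)
    (hγ₀ : 0 < γ) (hγ₁ : γ < 1) (hδ₀ : 0 ≤ δ) (hδ : δ ≤ γ * α ^ 2 / 5) :
    Hypercontractive μ (noiseK μ (1 - γ)) (2 + δ) := by
  intro v
  set m := ∑ b, μ b * v b
  have hh : ∑ a, μ a * (v a - m) = 0 := by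
    simp only [mul_sub, sum_sub_distrib, ← sum_mul, hμ, one_mul]
    exact sub_self m
  have hvar : ∑ a, μ a * v a ^ 2 = m ^ 2 + ∑ a, μ a * (v a - m) ^ 2 := by
    rw [← one_mul (∑ a, μ a * (v a - m) ^ 2), ← sum_mul_quadratic hμ hh (m ^ 2) (2 * m) 1]
    exact sum_congr rfl fun a _ => by ring
  simp only [sum_noiseK_mul, hvar]
  exact sum_mul_abs_add_noise_rpow_le hα₀ hα₁ hμα hμ hh hγ₀ hγ₁ hδ₀ hδ

/-- hypercontractivity of the noise operator, reverse-parameter form.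
For every finite probability space with all atoms of positive probability, minimum atom
probability `α ≤ 1/2`, and every `γ ∈ (0,1)`, there is `δ > 0` depending only on `γ` and `α`
such that `‖T_{1-γ} f‖_{2+δ} ≤ ‖f‖₂` for every `n ≥ 1` and every `f : Ω^n → ℝ`. -/
theorem hypercontractivity (γ α : ℝ) (hγ0 : 0 < γ) (hγ1 : γ < 1)
    (hα0 : 0 < α) (hα : α ≤ 1 / 2) :
    ∃ δ : ℝ, 0 < δ ∧
      ∀ (Ω : Type) [Fintype Ω] [DecidableEq Ω] (μ : Ω → ℝ),
        (∀ a, 0 < μ a) → (∑ a, μ a = 1) →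
        (∀ a, α ≤ μ a) → (∃ a, μ a = α) →
        ∀ (n : ℕ), 1 ≤ n → ∀ f : (Fin n → Ω) → ℝ,
          lpNormW μ (2 + δ) (noiseOp μ (1 - γ) f) ≤ lpNormW μ 2 f := by
  refine ⟨γ * α ^ 2 / 5, by positivity, ?_⟩
  intro Ω _ _ μ hμ₀ hμ hμα _ n _ f
  have hK : Hypercontractive μ (noiseK μ (1 - γ)) (2 + γ * α ^ 2 / 5) :=
    hypercontractive_noiseK hα0 (by linarith) hμα hμ hγ0 hγ1 (by positivity) le_rfl
  exact hK.lpNormW_prodKernelOp_le (fun a => (hμ₀ a).le) (le_add_of_nonneg_right (by positivity)) f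

end OCSPPaper
end
end

section
/- Fix an ordering predicate P ⊆ S_m, finite sets Q_1, Q_2 ⊆ ℤ, an integer 1 ≤ t < m, a probability distribution D on Q_1^t × Q_2^{m−t}, finite label sets L_0 and R_0, a map π : R_0 → L_0, and γ ∈ (0,1). Fix i ∈ R_0 and define g : Q_2^{R_0} → ℤ by g(y) = y_i and f : Q_1^{L_0} → ℤ by f(x) = x_{π(i)}. Then the acceptance probability satisfies acc_{f,g}(D^γ_π) ≥ E_{a∼D}[P(a)] − γ·m, where P(a) is the extension of P evaluated at the m-tuple a of integers. -/
open Classical Finset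

noncomputable section
namespace OCSPPaper

/-- A permutation `σ` is compatible with the tuple `a` if `σ i < σ j` whenever `a i < a j`. -/
def compatiblePerm {m : ℕ} (a : Fin m → ℤ) (σ : Equiv.Perm (Fin m)) : Prop :=
  ∀ i j : Fin m, a i < a j → σ i < σ j

/-- The extension of an ordering predicate `P ⊆ S_m` to arbitrary integer tuples:
the fraction of compatible permutations that belong to `P`. -/
noncomputable def extPred {m : ℕ} (P : Finset (Equiv.Perm (Fin m))) (a : Fin m → ℤ) : ℝ :=
  ((Finset.univ.filter fun σ => compatiblePerm a σ ∧ σ ∈ P).card : ℝ) /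
    ((Finset.univ.filter fun σ => compatiblePerm a σ).card : ℝ)

/-- Marginal of a density `D` on the first block of `t` coordinates. -/
noncomputable def margFst {t s : ℕ} {Q1 Q2 : Finset ℤ}
    (D : (Fin t → ↥Q1) × (Fin s → ↥Q2) → ℝ) (x : Fin t → ↥Q1) : ℝ :=
  ∑ y : Fin s → ↥Q2, D (x, y)

/-- Marginal of a density `D` on the last block of `s` coordinates. -/
noncomputable def margSnd {t s : ℕ} {Q1 Q2 : Finset ℤ}
    (D : (Fin t → ↥Q1) × (Fin s → ↥Q2) → ℝ) (y : Fin s → ↥Q2) : ℝ :=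
  ∑ x : Fin t → ↥Q1, D (x, y)

/-- Noise kernel: with probability `1-γ` keep the value, with probability `γ` resample
uniformly. -/
noncomputable def unifNoise (γ : ℝ) {α : Type*} [Fintype α] [DecidableEq α] (a b : α) : ℝ :=
  (1 - γ) * (if b = a then 1 else 0) + γ * (1 / (Fintype.card α : ℝ))

/-- Density of the dictatorship-test distribution `D^γ_π`: rows of `X` are sampled from the
first-block marginal of `D`, rows of `Y` from the conditional distribution of the second block
given the first block at the projected coordinate, and then every entry is independently
replaced by a uniform element with probability `γ`. -/
noncomputable def testDensity {t s : ℕ} {Q1 Q2 : Finset ℤ}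
    {L0 R0 : Type} [Fintype L0] [Fintype R0] [DecidableEq L0] [DecidableEq R0]
    (D : (Fin t → ↥Q1) × (Fin s → ↥Q2) → ℝ) (γ : ℝ) (π : R0 → L0)
    (X : Fin t → L0 → ↥Q1) (Y : Fin s → R0 → ↥Q2) : ℝ :=
  ∑ X0 : Fin t → L0 → ↥Q1, ∑ Y0 : Fin s → R0 → ↥Q2,
    ((∏ l : L0, margFst D (fun i => X0 i l)) *
      ∏ r : R0, D (fun i => X0 i (π r), fun j => Y0 j r) / margFst D (fun i => X0 i (π r))) *
    ((∏ i : Fin t, ∏ l : L0, unifNoise γ (X0 i l) (X i l)) *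
      ∏ j : Fin s, ∏ r : R0, unifNoise γ (Y0 j r) (Y j r))

/-- Acceptance probability `acc_{f,g}(D^γ_π)` of a pair of (ordering) tables `f`, `g`. -/
noncomputable def accProb {t s : ℕ} {Q1 Q2 : Finset ℤ}
    {L0 R0 : Type} [Fintype L0] [Fintype R0] [DecidableEq L0] [DecidableEq R0]
    (P : Finset (Equiv.Perm (Fin (t + s))))
    (D : (Fin t → ↥Q1) × (Fin s → ↥Q2) → ℝ) (γ : ℝ) (π : R0 → L0)
    (f : (L0 → ↥Q1) → ℤ) (g : (R0 → ↥Q2) → ℤ) : ℝ :=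
  ∑ X : Fin t → L0 → ↥Q1, ∑ Y : Fin s → R0 → ↥Q2,
    testDensity D γ π X Y * extPred P (Fin.append (fun i => f (X i)) (fun j => g (Y j)))

/-- `E_{a ∼ D}[P(a)]`, the expected (extended) predicate value of a sample from `D`. -/
noncomputable def baseVal {t s : ℕ} {Q1 Q2 : Finset ℤ}
    (P : Finset (Equiv.Perm (Fin (t + s))))
    (D : (Fin t → ↥Q1) × (Fin s → ↥Q2) → ℝ) : ℝ :=
  ∑ p : (Fin t → ↥Q1) × (Fin s → ↥Q2),
    D p * extPred P (Fin.append (fun i => ((p.1 i : ℤ))) (fun j => ((p.2 j : ℤ))))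

/-!
Sample the test in two stages: first the noiseless matrices `(X₀, Y₀)`, then the noise. The
dictators read only column `π i` of `X` and column `i` of `Y`. In the noiseless sample these two
columns are jointly distributed as `D`, since every other row of `X₀` and `Y₀` is summed out by a
marginal or a conditional distribution. With probability at least `(1 - γ) ^ m` the noise leaves
all `m` entries of these columns unchanged, so `acc ≥ (1 - γ) ^ m · E_D[P] ≥ E_D[P] - γ m` by
Bernoulli's inequality.
-/

lemma sum_pi_prod_mul_apply {ι β R : Type*} [Fintype ι] [DecidableEq ι] [Fintype β]
    [CommSemiring R] (p : ι → β → R) (i₀ : ι) (h : β → R) :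
    ∑ z : ι → β, (∏ i, p i (z i)) * h (z i₀) =
      (∏ i ∈ {i₀}ᶜ, ∑ b, p i b) * ∑ b, p i₀ b * h b := by
  have hupd : ∀ (F : ι → (β → R) → R),
      ∏ i, F i (Function.update p i₀ (fun b => p i₀ b * h b) i) =
        (∏ i ∈ {i₀}ᶜ, F i (p i)) * F i₀ (fun b => p i₀ b * h b) := fun F => by
    simp_rw [Function.apply_update F]
    rw [prod_update_of_mem (mem_univ i₀), mul_comm, compl_eq_univ_sdiff]
  have key := Fintype.prod_sum (Function.update p i₀ fun b => p i₀ b * h b)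
  rw [hupd fun _ s => ∑ b, s b] at key
  rw [key]
  refine sum_congr rfl fun z _ => ?_
  rw [hupd fun i s => s (z i), Fintype.prod_eq_prod_compl_mul i₀, mul_assoc]

section Noise

variable {α : Type*} [Fintype α] [DecidableEq α] {γ : ℝ}

lemma unifNoise_nonneg (hγ0 : 0 ≤ γ) (hγ1 : γ ≤ 1) (a b : α) : 0 ≤ unifNoise γ a b :=
  add_nonneg (mul_nonneg (sub_nonneg.2 hγ1) (by split_ifs <;> norm_num)) (by positivity)

lemma sub_le_unifNoise_self (hγ0 : 0 ≤ γ) (a : α) : 1 - γ ≤ unifNoise γ a a := by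
  simp only [unifNoise, if_pos, mul_one, le_add_iff_nonneg_right]
  positivity

lemma sum_unifNoise (γ : ℝ) (a : α) : ∑ b, unifNoise γ a b = 1 := by
  have : Nonempty α := ⟨a⟩
  have hcard : (Fintype.card α : ℝ) ≠ 0 := Nat.cast_ne_zero.2 Fintype.card_ne_zero
  simp only [unifNoise, sum_add_distrib, ← mul_sum, sum_ite_eq', mem_univ, if_true, sum_const,
    card_univ, nsmul_eq_mul]
  field_simp
  ring

variable {ι κ : Type*} [Fintype ι] [Fintype κ]

def noiseWeight (γ : ℝ) (Z₀ Z : ι → κ → α) : ℝ :=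
  ∏ k, ∏ l, unifNoise γ (Z₀ k l) (Z k l)

lemma noiseWeight_nonneg (hγ0 : 0 ≤ γ) (hγ1 : γ ≤ 1) (Z₀ Z : ι → κ → α) :
    0 ≤ noiseWeight γ Z₀ Z :=
  prod_nonneg fun _ _ => prod_nonneg fun _ _ => unifNoise_nonneg hγ0 hγ1 _ _

variable [DecidableEq ι] [DecidableEq κ]

lemma sum_noiseWeight_mul_col (γ : ℝ) (Z₀ : ι → κ → α) (l₀ : κ) (G : (ι → α) → ℝ) :
    ∑ Z, noiseWeight γ Z₀ Z * G (fun k => Z k l₀) =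
      ∑ x, (∏ k, unifNoise γ (Z₀ k l₀) (x k)) * G x := by
  calc ∑ Z, noiseWeight γ Z₀ Z * G (fun k => Z k l₀)
      = ∑ Z : κ → ι → α, (∏ l, ∏ k, unifNoise γ (Z₀ k l) (Z l k)) * G (Z l₀) :=
        Fintype.sum_equiv (Equiv.piComm _) _ _ fun Z => by rw [noiseWeight, prod_comm]; rfl
    _ = ∑ x, (∏ k, unifNoise γ (Z₀ k l₀) (x k)) * G x := by
        refine (sum_pi_prod_mul_apply (fun l (x : ι → α) => ∏ k, unifNoise γ (Z₀ k l) (x k))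
          l₀ G).trans ?_
        simp [← Fintype.prod_sum, sum_unifNoise]

lemma pow_mul_le_sum_noiseWeight_mul (hγ0 : 0 ≤ γ) (hγ1 : γ ≤ 1) (Z₀ : ι → κ → α) (l₀ : κ)
    (G : (ι → α) → ℝ) (hG : ∀ x, 0 ≤ G x) :
    (1 - γ) ^ Fintype.card ι * G (fun k => Z₀ k l₀) ≤
      ∑ Z, noiseWeight γ Z₀ Z * G (fun k => Z k l₀) := by
  rw [sum_noiseWeight_mul_col]
  calc (1 - γ) ^ Fintype.card ι * G (fun k => Z₀ k l₀)
      ≤ (∏ k, unifNoise γ (Z₀ k l₀) (Z₀ k l₀)) * G (fun k => Z₀ k l₀) := by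
        rw [← card_univ, ← prod_const]
        exact mul_le_mul_of_nonneg_right (prod_le_prod (fun _ _ => sub_nonneg.2 hγ1)
          fun _ _ => sub_le_unifNoise_self hγ0 _) (hG _)
    _ ≤ _ := single_le_sum (f := fun x => (∏ k, unifNoise γ (Z₀ k l₀) (x k)) * G x)
        (fun x _ => mul_nonneg (prod_nonneg fun _ _ => unifNoise_nonneg hγ0 hγ1 _ _) (hG x))
        (mem_univ _)

lemma pow_add_mul_le_sum_noiseWeight_mul {β ι' κ' : Type*} [Fintype β] [DecidableEq β]
    [Fintype ι'] [DecidableEq ι'] [Fintype κ'] [DecidableEq κ'] (hγ0 : 0 ≤ γ) (hγ1 : γ ≤ 1)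
    (X₀ : ι → κ → α) (Y₀ : ι' → κ' → β) (l₀ : κ) (r₀ : κ') (F : (ι → α) → (ι' → β) → ℝ)
    (hF : ∀ x y, 0 ≤ F x y) :
    (1 - γ) ^ (Fintype.card ι + Fintype.card ι') *
        F (fun k => X₀ k l₀) (fun j => Y₀ j r₀) ≤
      ∑ X, ∑ Y, noiseWeight γ X₀ X * noiseWeight γ Y₀ Y *
        F (fun k => X k l₀) (fun j => Y j r₀) := by
  calc (1 - γ) ^ (Fintype.card ι + Fintype.card ι') * F (fun k => X₀ k l₀) (fun j => Y₀ j r₀)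
      = (1 - γ) ^ Fintype.card ι * ((1 - γ) ^ Fintype.card ι' *
          F (fun k => X₀ k l₀) (fun j => Y₀ j r₀)) := by rw [pow_add, mul_assoc]
    _ ≤ ∑ X, noiseWeight γ X₀ X * ((1 - γ) ^ Fintype.card ι' *
          F (fun k => X k l₀) (fun j => Y₀ j r₀)) :=
        pow_mul_le_sum_noiseWeight_mul hγ0 hγ1 X₀ l₀
          (fun x => (1 - γ) ^ Fintype.card ι' * F x fun j => Y₀ j r₀)
          fun _ => mul_nonneg (pow_nonneg (sub_nonneg.2 hγ1) _) (hF _ _)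
    _ ≤ ∑ X, noiseWeight γ X₀ X *
          ∑ Y, noiseWeight γ Y₀ Y * F (fun k => X k l₀) (fun j => Y j r₀) :=
        sum_le_sum fun X _ => mul_le_mul_of_nonneg_left
          (pow_mul_le_sum_noiseWeight_mul hγ0 hγ1 Y₀ r₀ (F fun k => X k l₀) fun y => hF _ y)
          (noiseWeight_nonneg hγ0 hγ1 X₀ X)
    _ = _ := by simp only [mul_sum, mul_assoc]

end Noise

lemma extPred_nonneg {m : ℕ} (P : Finset (Equiv.Perm (Fin m))) (a : Fin m → ℤ) :
    0 ≤ extPred P a :=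
  div_nonneg (Nat.cast_nonneg _) (Nat.cast_nonneg _)

lemma extPred_le_one {m : ℕ} (P : Finset (Equiv.Perm (Fin m))) (a : Fin m → ℤ) :
    extPred P a ≤ 1 :=
  div_le_one_of_le₀ (Nat.cast_le.2 (card_le_card fun _ hσ => by
    simp only [mem_filter] at hσ ⊢; exact ⟨hσ.1, hσ.2.1⟩)) (Nat.cast_nonneg _)

lemma baseVal_nonneg {t s : ℕ} {Q1 Q2 : Finset ℤ} (P : Finset (Equiv.Perm (Fin (t + s))))
    {D : (Fin t → ↥Q1) × (Fin s → ↥Q2) → ℝ} (hDnn : ∀ p, 0 ≤ D p) : 0 ≤ baseVal P D :=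
  sum_nonneg fun p _ => mul_nonneg (hDnn p) (extPred_nonneg _ _)

lemma baseVal_le_one {t s : ℕ} {Q1 Q2 : Finset ℤ} (P : Finset (Equiv.Perm (Fin (t + s))))
    {D : (Fin t → ↥Q1) × (Fin s → ↥Q2) → ℝ} (hDnn : ∀ p, 0 ≤ D p) (hDsum : ∑ p, D p = 1) :
    baseVal P D ≤ 1 :=
  hDsum ▸ sum_le_sum fun p _ => mul_le_of_le_one_right (hDnn p) (extPred_le_one _ _)

lemma sub_mul_le_pow_mul {γ b : ℝ} (hγ0 : 0 ≤ γ) (hγ2 : γ ≤ 2) (hb0 : 0 ≤ b) (hb1 : b ≤ 1)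
    (n : ℕ) : b - γ * n ≤ (1 - γ) ^ n * b := by
  have bernoulli : 1 - n * γ ≤ (1 - γ) ^ n := by
    simpa [sub_eq_add_neg] using one_add_mul_le_pow (a := -γ) (by linarith) n
  nlinarith [mul_le_mul_of_nonneg_right bernoulli hb0, mul_nonneg hγ0 (Nat.cast_nonneg (α := ℝ) n)]

section CleanSample

variable {t s : ℕ} {Q1 Q2 : Finset ℤ} {D : (Fin t → ↥Q1) × (Fin s → ↥Q2) → ℝ}

lemma margFst_mul_div (hDnn : ∀ p, 0 ≤ D p) (x : Fin t → ↥Q1) (y : Fin s → ↥Q2) :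
    margFst D x * (D (x, y) / margFst D x) = D (x, y) := by
  by_cases hx : margFst D x = 0
  · rw [hx, (sum_eq_zero_iff_of_nonneg fun y _ => hDnn (x, y)).1 hx y (mem_univ y)]
    simp
  · exact mul_div_cancel₀ _ hx

lemma sum_margFst (hDsum : ∑ p, D p = 1) : ∑ x, margFst D x = 1 := by
  rw [← hDsum, Fintype.sum_prod_type]
  rfl

/-- The conditional distribution of the second block given `x` has mass `1` unless
`margFst D x = 0`, and then the whole product vanishes. -/
lemma prod_margFst_mul_prod_sum_div {L0 R0 : Type*} [Fintype L0] (π : R0 → L0)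
    (X : L0 → Fin t → ↥Q1) (S : Finset R0) :
    (∏ l, margFst D (X l)) * ∏ r ∈ S, ∑ y, D (X (π r), y) / margFst D (X (π r)) =
      ∏ l, margFst D (X l) := by
  by_cases hX : ∃ l, margFst D (X l) = 0
  · obtain ⟨l, hl⟩ := hX
    rw [prod_eq_zero (mem_univ l) hl, zero_mul]
  · rw [not_exists] at hX
    rw [prod_eq_one (s := S) fun r _ => by rw [← sum_div]; exact div_self (hX (π r)), mul_one]

variable {L0 R0 : Type*} [Fintype L0] [Fintype R0]

/-- Weight of the noiseless sample `(X₀, Y₀)` in `D^γ_π`. -/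
def cleanWeight (D : (Fin t → ↥Q1) × (Fin s → ↥Q2) → ℝ) (π : R0 → L0)
    (X₀ : Fin t → L0 → ↥Q1) (Y₀ : Fin s → R0 → ↥Q2) : ℝ :=
  (∏ l : L0, margFst D (fun k => X₀ k l)) *
    ∏ r : R0, D (fun k => X₀ k (π r), fun j => Y₀ j r) / margFst D (fun k => X₀ k (π r))

lemma cleanWeight_nonneg (hDnn : ∀ p, 0 ≤ D p) (π : R0 → L0) (X₀ : Fin t → L0 → ↥Q1)
    (Y₀ : Fin s → R0 → ↥Q2) : 0 ≤ cleanWeight D π X₀ Y₀ :=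
  mul_nonneg (prod_nonneg fun _ _ => sum_nonneg fun _ _ => hDnn _)
    (prod_nonneg fun _ _ => div_nonneg (hDnn _) (sum_nonneg fun _ _ => hDnn _))

lemma sum_cleanWeight_mul_col [DecidableEq L0] [DecidableEq R0] (hDnn : ∀ p, 0 ≤ D p)
    (hDsum : ∑ p, D p = 1) (π : R0 → L0) (i : R0) (h : (Fin t → ↥Q1) → (Fin s → ↥Q2) → ℝ) :
    ∑ X₀, ∑ Y₀, cleanWeight D π X₀ Y₀ * h (fun k => X₀ k (π i)) (fun j => Y₀ j i) =
      ∑ p, D p * h p.1 p.2 := by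
  calc ∑ X₀, ∑ Y₀, cleanWeight D π X₀ Y₀ * h (fun k => X₀ k (π i)) (fun j => Y₀ j i)
      = ∑ X : L0 → Fin t → ↥Q1, ∑ Y : R0 → Fin s → ↥Q2, (∏ l, margFst D (X l)) *
          ((∏ r, D (X (π r), Y r) / margFst D (X (π r))) * h (X (π i)) (Y i)) :=
        Fintype.sum_equiv (Equiv.piComm _) _ _ fun X₀ =>
          Fintype.sum_equiv (Equiv.piComm _) _ _ fun Y₀ => mul_assoc _ _ _
    _ = ∑ X : L0 → Fin t → ↥Q1, (∏ l, margFst D (X l)) *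
          ∑ y, D (X (π i), y) / margFst D (X (π i)) * h (X (π i)) y := by
        refine sum_congr rfl fun X _ => ?_
        rw [← mul_sum, sum_pi_prod_mul_apply
          (fun r (y : Fin s → ↥Q2) => D (X (π r), y) / margFst D (X (π r))) i (h (X (π i))),
          ← mul_assoc, prod_margFst_mul_prod_sum_div]
    _ = ∑ x, margFst D x * ∑ y, D (x, y) / margFst D x * h x y := by
        refine (sum_pi_prod_mul_apply (fun _ => margFst D) (π i)
          fun x => ∑ y, D (x, y) / margFst D x * h x y).trans ?_
        simp [sum_margFst hDsum]
    _ = ∑ p, D p * h p.1 p.2 := by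
        simp only [mul_sum, ← mul_assoc, margFst_mul_div hDnn, Fintype.sum_prod_type]

end CleanSample

lemma accProb_eq_sum_cleanWeight_mul {t s : ℕ} {Q1 Q2 : Finset ℤ}
    {L0 R0 : Type} [Fintype L0] [Fintype R0] [DecidableEq L0] [DecidableEq R0]
    (P : Finset (Equiv.Perm (Fin (t + s))))
    (D : (Fin t → ↥Q1) × (Fin s → ↥Q2) → ℝ) (γ : ℝ) (π : R0 → L0)
    (f : (L0 → ↥Q1) → ℤ) (g : (R0 → ↥Q2) → ℤ) :
    accProb P D γ π f g = ∑ X₀, ∑ Y₀, cleanWeight D π X₀ Y₀ *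
      ∑ X, ∑ Y, noiseWeight γ X₀ X * noiseWeight γ Y₀ Y *
        extPred P (Fin.append (fun k => f (X k)) (fun j => g (Y j))) := by
  simp only [accProb, testDensity, sum_mul, mul_sum, ← Fintype.sum_prod_type']
  refine Fintype.sum_equiv ((Equiv.prodAssoc _ _ _).symm.trans
    ((Equiv.prodComm _ _).trans (Equiv.prodAssoc _ _ _))) _ _ fun _ => ?_
  simp only [cleanWeight, noiseWeight, Equiv.trans_apply, Equiv.prodAssoc_symm_apply,
    Equiv.prodComm_apply, Equiv.prodAssoc_apply, Prod.swap_prod_mk]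
  ring

theorem dictator_acceptance_general {t s : ℕ}
    (Q1 Q2 : Finset ℤ)
    (P : Finset (Equiv.Perm (Fin (t + s))))
    (D : (Fin t → ↥Q1) × (Fin s → ↥Q2) → ℝ)
    (hDnn : ∀ p, 0 ≤ D p) (hDsum : ∑ p, D p = 1)
    (L0 R0 : Type) [Fintype L0] [Fintype R0] [DecidableEq L0] [DecidableEq R0]
    (π : R0 → L0) (γ : ℝ) (hγ0 : 0 < γ) (hγ1 : γ < 1) (i : R0) :
    accProb P D γ π (fun x => ((x (π i) : ℤ))) (fun y => ((y i : ℤ)))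
      ≥ baseVal P D - γ * (t + s : ℝ) := by
  let F : (Fin t → ↥Q1) → (Fin s → ↥Q2) → ℝ := fun x y =>
    extPred P (Fin.append (fun k => (x k : ℤ)) fun j => (y j : ℤ))
  have noise_bound (X₀ : Fin t → L0 → ↥Q1) (Y₀ : Fin s → R0 → ↥Q2) :
      (1 - γ) ^ (t + s) * F (fun k => X₀ k (π i)) (fun j => Y₀ j i) ≤
        ∑ X, ∑ Y, noiseWeight γ X₀ X * noiseWeight γ Y₀ Y *
          F (fun k => X k (π i)) (fun j => Y j i) := by
    simpa only [Fintype.card_fin] using pow_add_mul_le_sum_noiseWeight_mul hγ0.le hγ1.le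
      X₀ Y₀ (π i) i F fun _ _ => extPred_nonneg _ _
  calc baseVal P D - γ * (t + s : ℝ)
      ≤ (1 - γ) ^ (t + s) * baseVal P D := by
        exact_mod_cast sub_mul_le_pow_mul hγ0.le (by linarith) (baseVal_nonneg P hDnn)
          (baseVal_le_one P hDnn hDsum) (t + s)
    _ = ∑ p, D p * ((1 - γ) ^ (t + s) * F p.1 p.2) := by
        simp only [baseVal, mul_sum, mul_left_comm, F]
    _ = ∑ X₀, ∑ Y₀, cleanWeight D π X₀ Y₀ *
          ((1 - γ) ^ (t + s) * F (fun k => X₀ k (π i)) (fun j => Y₀ j i)) :=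
        (sum_cleanWeight_mul_col hDnn hDsum π i fun x y => (1 - γ) ^ (t + s) * F x y).symm
    _ ≤ _ := by
        rw [accProb_eq_sum_cleanWeight_mul]
        gcongr with X₀ _ Y₀ _
        exacts [cleanWeight_nonneg hDnn π X₀ Y₀, noise_bound X₀ Y₀]

/-- Lemma: completeness of the dictatorship test.
If `g(y) = y_i` and `f(x) = x_{π(i)}` are dictators matched by the projection `π`, then the
acceptance probability of the test is at least `E_{a∼D}[P(a)] − γ·m` (here `m = t + s`). -/
theorem dictator_acceptance {t s : ℕ} (ht : 1 ≤ t) (hs : 1 ≤ s)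
    (Q1 Q2 : Finset ℤ) (hQ1 : Q1.Nonempty) (hQ2 : Q2.Nonempty)
    (P : Finset (Equiv.Perm (Fin (t + s))))
    (D : (Fin t → ↥Q1) × (Fin s → ↥Q2) → ℝ)
    (hDnn : ∀ p, 0 ≤ D p) (hDsum : ∑ p, D p = 1)
    (L0 R0 : Type) [Fintype L0] [Fintype R0] [DecidableEq L0] [DecidableEq R0]
    (π : R0 → L0) (γ : ℝ) (hγ0 : 0 < γ) (hγ1 : γ < 1) (i : R0) :
    accProb P D γ π (fun x => ((x (π i) : ℤ))) (fun y => ((y i : ℤ)))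
      ≥ baseVal P D - γ * (t + s : ℝ) :=
  dictator_acceptance_general Q1 Q2 P D hDnn hDsum L0 R0 π γ hγ0 hγ1 i

end OCSPPaper
end
end

section
/- Fix an integer q ≥ 2 and let (x_1, x_2, x_3) ∼ D_NBTW. Then the three coordinates are pairwise independent and each is uniformly distributed on [q], and E[NBTW(x_1, x_2, x_3)] ≥ 1 − 3/q, where NBTW is evaluated via its extension to ℤ^3. -/
/-!
Sampling from `D_NBTW` means summing over the `q²` pairs `(x, y) ∈ [q]²` with weight `1/q²`,
so each probability in the statement is a count divided by `q²`. For fixed `x`, the translation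
`y ↦ (x + y) mod q` permutes `[q]`; hence fixing one coordinate leaves `q` pairs and fixing two
leaves exactly one, which gives uniform marginals and pairwise independence.

For `0 < x, y < q` the third coordinate is either `x + y`, above both, or `x + y - q`, below
both, so NBTW holds with certainty. Discarding the pairs with `x = 0` or `y = 0` gives
`E[NBTW] ≥ (1 - 1/q)² ≥ 1 - 3/q`.
-/

open Classical Finset

noncomputable section
namespace OCSPPaper

/-- The non-betweenness predicate `NBTW ⊆ S_3`: the third element does not lie strictly
between the first two. -/
def nbtwPerm3 : Finset (Equiv.Perm (Fin 3)) :=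
  Finset.univ.filter fun σ => σ 2 ≠ 1

/-- Density of the distribution `D_NBTW` on `ℤ³`: `x₁, x₂` independent uniform on `[q]` and
`x₃ = x₁ + x₂ mod q`. -/
noncomputable def dNBTW (q : ℕ) : ℤ × ℤ × ℤ → ℝ := fun p =>
  if 0 ≤ p.1 ∧ p.1 < (q : ℤ) ∧ 0 ≤ p.2.1 ∧ p.2.1 < (q : ℤ) ∧
      p.2.2 = (p.1 + p.2.1) % (q : ℤ)
  then 1 / ((q : ℝ) * q) else 0

/-- Marginal of the first coordinate of `D_NBTW`. -/
noncomputable def dNBTWm1 (q : ℕ) (a : ℤ) : ℝ :=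
  ∑ᶠ p : ℤ × ℤ × ℤ, if p.1 = a then dNBTW q p else 0

/-- Marginal of the second coordinate of `D_NBTW`. -/
noncomputable def dNBTWm2 (q : ℕ) (a : ℤ) : ℝ :=
  ∑ᶠ p : ℤ × ℤ × ℤ, if p.2.1 = a then dNBTW q p else 0

/-- Marginal of the third coordinate of `D_NBTW`. -/
noncomputable def dNBTWm3 (q : ℕ) (a : ℤ) : ℝ :=
  ∑ᶠ p : ℤ × ℤ × ℤ, if p.2.2 = a then dNBTW q p else 0


lemma sum_Ico_emod_add {M : Type*} [AddCommMonoid M] (q : ℕ) (f : ℤ → M) (t : ℤ) :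
    ∑ y ∈ Ico (0 : ℤ) q, f ((t + y) % q) = ∑ y ∈ Ico (0 : ℤ) q, f y := by
  rcases Nat.eq_zero_or_pos q with rfl | hq
  · simp
  have hq' : (0 : ℤ) < q := by exact_mod_cast hq
  have mem : ∀ z : ℤ, z % q ∈ Ico (0 : ℤ) q := fun z =>
    mem_Ico.2 ⟨Int.emod_nonneg _ hq'.ne', Int.emod_lt_of_pos _ hq'⟩
  refine sum_nbij' (fun y => (t + y) % q) (fun z => (z - t) % q) (fun y _ => mem _)
    (fun z _ => mem _) (fun y hy => ?_) (fun z hz => ?_) (fun _ _ => rfl)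
  · rw [mem_Ico] at hy
    rw [Int.emod_sub_emod, add_sub_cancel_left, Int.emod_eq_of_lt hy.1 hy.2]
  · rw [mem_Ico] at hz
    rw [Int.add_emod_emod, add_sub_cancel, Int.emod_eq_of_lt hz.1 hz.2]

lemma finsum_eq_sum_of_support_subset_dNBTW (q : ℕ) (g : ℤ × ℤ × ℤ → ℝ)
    (hg : Function.support g ⊆ Function.support (dNBTW q)) :
    ∑ᶠ p, g p = ∑ x ∈ Ico (0 : ℤ) q, ∑ y ∈ Ico (0 : ℤ) q, g (x, y, (x + y) % q) := by
  set e : ℤ × ℤ → ℤ × ℤ × ℤ := fun p => (p.1, p.2, (p.1 + p.2) % q)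
  have he : Set.InjOn e ↑(Ico (0 : ℤ) q ×ˢ Ico (0 : ℤ) q) := fun p _ p' _ h =>
    Prod.ext (congrArg (·.1) h) (congrArg (·.2.1) h)
  have hsupp : Function.support g ⊆ ↑((Ico (0 : ℤ) q ×ˢ Ico (0 : ℤ) q).image e) := by
    intro p hp
    have hp := hg hp
    simp only [Function.mem_support, dNBTW, ne_eq, ite_eq_right_iff, not_forall] at hp
    obtain ⟨⟨h1, h2, h3, h4, h5⟩, -⟩ := hp
    simp only [coe_image, Set.mem_image, mem_coe, mem_product, mem_Ico]
    exact ⟨(p.1, p.2.1), ⟨⟨h1, h2⟩, h3, h4⟩, by simp [e, ← h5]⟩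
  rw [finsum_eq_sum_of_support_subset g hsupp, sum_image he, sum_product]

lemma finsum_dNBTW_mul (q : ℕ) (f : ℤ × ℤ × ℤ → ℝ) :
    ∑ᶠ p, dNBTW q p * f p =
      (∑ x ∈ Ico (0 : ℤ) q, ∑ y ∈ Ico (0 : ℤ) q, f (x, y, (x + y) % q)) / (q * q) := by
  rw [finsum_eq_sum_of_support_subset_dNBTW q _ (Function.support_mul_subset_left _ _),
    sum_div]
  refine sum_congr rfl fun x hx => ?_
  rw [sum_div]
  refine sum_congr rfl fun y hy => ?_
  rw [mem_Ico] at hx hy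
  simp [dNBTW, hx, hy, div_eq_inv_mul]

lemma finsum_ite_dNBTW (q : ℕ) (C : ℤ × ℤ × ℤ → Prop) [DecidablePred C] :
    (∑ᶠ p, if C p then dNBTW q p else 0) =
      (∑ x ∈ Ico (0 : ℤ) q, ∑ y ∈ Ico (0 : ℤ) q,
        if C (x, y, (x + y) % q) then 1 else 0) / (q * q) := by
  rw [finsum_congr fun p => (mul_boole (C p) (dNBTW q p)).symm]
  exact finsum_dNBTW_mul q _

lemma dNBTWm1_eq (q : ℕ) (a : ℤ) :
    dNBTWm1 q a = if 0 ≤ a ∧ a < (q : ℤ) then 1 / (q : ℝ) else 0 := by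
  rw [dNBTWm1, finsum_ite_dNBTW]
  -- `change` also reduces the `Decidable` instances of the conditions, which `simp` cannot reach.
  change (∑ x ∈ _, ∑ _y ∈ _, if x = a then (1 : ℝ) else 0) / _ = _
  simp only [sum_const, Int.card_Ico, sub_zero, Int.toNat_natCast, nsmul_eq_mul, mul_ite,
    mul_one, mul_zero, sum_ite_eq', mem_Ico]
  split_ifs
  · field_simp
  · simp

lemma dNBTWm2_eq (q : ℕ) (a : ℤ) :
    dNBTWm2 q a = if 0 ≤ a ∧ a < (q : ℤ) then 1 / (q : ℝ) else 0 := by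
  rw [dNBTWm2, finsum_ite_dNBTW]
  change (∑ _x ∈ _, ∑ y ∈ _, if y = a then (1 : ℝ) else 0) / _ = _
  simp only [sum_ite_eq', mem_Ico, sum_const, Int.card_Ico, sub_zero, Int.toNat_natCast,
    nsmul_eq_mul, mul_ite, mul_one, mul_zero]
  split_ifs
  · field_simp
  · simp

lemma dNBTWm3_eq (q : ℕ) (a : ℤ) :
    dNBTWm3 q a = if 0 ≤ a ∧ a < (q : ℤ) then 1 / (q : ℝ) else 0 := by
  rw [dNBTWm3, finsum_ite_dNBTW]
  change (∑ x ∈ _, ∑ y ∈ _, if (x + y) % (q : ℤ) = a then (1 : ℝ) else 0) / _ = _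
  simp only [sum_Ico_emod_add q (fun z => if z = a then (1 : ℝ) else 0), sum_ite_eq', mem_Ico,
    sum_const, Int.card_Ico, sub_zero, Int.toNat_natCast, nsmul_eq_mul, mul_ite, mul_one, mul_zero]
  split_ifs
  · field_simp
  · simp

lemma finsum_ite_fst_snd_dNBTW_eq_mul (q : ℕ) (a b : ℤ) :
    (∑ᶠ p : ℤ × ℤ × ℤ, if p.1 = a ∧ p.2.1 = b then dNBTW q p else 0)
      = dNBTWm1 q a * dNBTWm2 q b := by
  rw [finsum_ite_dNBTW, dNBTWm1_eq, dNBTWm2_eq]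
  change (∑ x ∈ _, ∑ y ∈ _, if x = a ∧ y = b then (1 : ℝ) else 0) / _ = _
  simp only [ite_and, sum_ite_irrel, sum_const_zero, sum_ite_eq', mem_Ico]
  split_ifs <;> field_simp <;> simp

lemma finsum_ite_fst_thd_dNBTW_eq_mul (q : ℕ) (a b : ℤ) :
    (∑ᶠ p : ℤ × ℤ × ℤ, if p.1 = a ∧ p.2.2 = b then dNBTW q p else 0)
      = dNBTWm1 q a * dNBTWm3 q b := by
  rw [finsum_ite_dNBTW, dNBTWm1_eq, dNBTWm3_eq]
  change (∑ x ∈ _, ∑ y ∈ _, if x = a ∧ (x + y) % (q : ℤ) = b then (1 : ℝ) else 0) / _ = _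
  simp only [ite_and, sum_ite_irrel, sum_const_zero, sum_ite_eq', mem_Ico,
    sum_Ico_emod_add q (fun z => if z = b then (1 : ℝ) else 0)]
  split_ifs <;> field_simp <;> simp

lemma finsum_ite_snd_thd_dNBTW_eq_mul (q : ℕ) (a b : ℤ) :
    (∑ᶠ p : ℤ × ℤ × ℤ, if p.2.1 = a ∧ p.2.2 = b then dNBTW q p else 0)
      = dNBTWm2 q a * dNBTWm3 q b := by
  rw [finsum_ite_dNBTW, dNBTWm2_eq, dNBTWm3_eq, sum_comm]
  change (∑ y ∈ _, ∑ x ∈ _, if y = a ∧ (x + y) % (q : ℤ) = b then (1 : ℝ) else 0) / _ = _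
  simp only [ite_and, sum_ite_irrel, sum_const_zero, sum_ite_eq', mem_Ico, add_comm _ a,
    sum_Ico_emod_add q (fun z => if z = b then (1 : ℝ) else 0)]
  split_ifs <;> field_simp <;> simp

lemma exists_compatiblePerm {m : ℕ} (a : Fin m → ℤ) : ∃ σ, compatiblePerm a σ := by
  refine ⟨(Tuple.sort a)⁻¹, fun i j hij => lt_of_not_ge fun h => ?_⟩
  have := Tuple.monotone_sort a h
  simp only [Function.comp_apply, Equiv.Perm.inv_def, Equiv.apply_symm_apply] at this
  exact hij.not_ge this

lemma extPred_eq_one {m : ℕ} {P : Finset (Equiv.Perm (Fin m))} {a : Fin m → ℤ}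
    (h : ∀ σ, compatiblePerm a σ → σ ∈ P) : extPred P a = 1 := by
  obtain ⟨σ, hσ⟩ := exists_compatiblePerm a
  have hpos : 0 < #(univ.filter fun σ => compatiblePerm a σ) :=
    card_pos.2 ⟨σ, mem_filter.2 ⟨mem_univ _, hσ⟩⟩
  rw [extPred, filter_congr fun σ _ => and_iff_left_of_imp (h σ)]
  exact div_self (by positivity)

lemma mem_nbtwPerm3_of_compatiblePerm {a : Fin 3 → ℤ} {σ : Equiv.Perm (Fin 3)}
    (ha : (a 0 < a 2 ∧ a 1 < a 2) ∨ (a 2 < a 0 ∧ a 2 < a 1)) (hσ : compatiblePerm a σ) :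
    σ ∈ nbtwPerm3 := by
  have h01 : σ 0 ≠ σ 1 := σ.injective.ne (by decide)
  simp only [nbtwPerm3, mem_filter, mem_univ, true_and, ne_eq, Fin.ext_iff] at h01 ⊢
  have := (σ 0).isLt; have := (σ 1).isLt; have := (σ 2).isLt
  rcases ha with ⟨h0, h1⟩ | ⟨h0, h1⟩
  · have := Fin.lt_def.1 (hσ 0 2 h0); have := Fin.lt_def.1 (hσ 1 2 h1); omega
  · have := Fin.lt_def.1 (hσ 2 0 h0); have := Fin.lt_def.1 (hσ 2 1 h1); omega

lemma extPred_nbtwPerm3_add_emod_eq_one {q : ℕ} {x y : ℤ} (hx : 0 < x ∧ x < q)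
    (hy : 0 < y ∧ y < q) :
    extPred nbtwPerm3 ![x, y, (x + y) % q] = 1 := by
  refine extPred_eq_one fun σ => mem_nbtwPerm3_of_compatiblePerm ?_
  simp only [Matrix.cons_val_zero, Matrix.cons_val_one, Matrix.cons_val_two, Matrix.head_cons,
    Matrix.tail_cons]
  rcases lt_or_ge (x + y) q with hlt | hge
  · rw [Int.emod_eq_of_lt (by omega) hlt]
    omega
  · rw [← Int.sub_emod_right, Int.emod_eq_of_lt (by omega) (by omega)]
    omega

lemma one_sub_inv_sq_le_finsum_dNBTW_mul_extPred {q : ℕ} (hq : 0 < q) :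
    (1 - 1 / (q : ℝ)) ^ 2 ≤
      ∑ᶠ p : ℤ × ℤ × ℤ, dNBTW q p * extPred nbtwPerm3 ![p.1, p.2.1, p.2.2] := by
  have hcard : (#(Ico (1 : ℤ) q) : ℝ) = q - 1 := by
    have := Int.card_Ico_of_le 1 q (by omega)
    exact_mod_cast this
  have hsub : Ico (1 : ℤ) q ⊆ Ico 0 q := Ico_subset_Ico_left zero_le_one
  rw [finsum_dNBTW_mul]
  dsimp only
  calc (1 - 1 / (q : ℝ)) ^ 2
        = (∑ _x ∈ Ico (1 : ℤ) q, ∑ _y ∈ Ico (1 : ℤ) q, (1 : ℝ)) / (q * q) := by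
        simp only [sum_const, nsmul_eq_mul, mul_one, hcard]
        field_simp
    _ = (∑ x ∈ Ico (1 : ℤ) q, ∑ y ∈ Ico (1 : ℤ) q, extPred nbtwPerm3 ![x, y, (x + y) % q]) /
          (q * q) := by
        congr 1
        refine sum_congr rfl fun x hx => sum_congr rfl fun y hy => ?_
        rw [mem_Ico] at hx hy
        exact (extPred_nbtwPerm3_add_emod_eq_one (by omega) (by omega)).symm
    _ ≤ (∑ x ∈ Ico (0 : ℤ) q, ∑ y ∈ Ico (0 : ℤ) q, extPred nbtwPerm3 ![x, y, (x + y) % q]) /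
          (q * q) := by
        gcongr
        refine (sum_le_sum fun x _ => ?_).trans (sum_le_sum_of_subset_of_nonneg hsub ?_)
        · exact sum_le_sum_of_subset_of_nonneg hsub fun _ _ _ => extPred_nonneg _ _
        · exact fun _ _ _ => sum_nonneg fun _ _ => extPred_nonneg _ _

/-- properties of the base distribution `D_NBTW`.
The three coordinates are uniform on `[q]` and pairwise independent, and
`E[NBTW(x₁, x₂, x₃)] ≥ 1 - 3/q`. -/
theorem dNBTW_properties (q : ℕ) (hq : 2 ≤ q) :
    (∀ a : ℤ, dNBTWm1 q a = if 0 ≤ a ∧ a < (q : ℤ) then 1 / (q : ℝ) else 0) ∧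
    (∀ a : ℤ, dNBTWm2 q a = if 0 ≤ a ∧ a < (q : ℤ) then 1 / (q : ℝ) else 0) ∧
    (∀ a : ℤ, dNBTWm3 q a = if 0 ≤ a ∧ a < (q : ℤ) then 1 / (q : ℝ) else 0) ∧
    (∀ a b : ℤ, (∑ᶠ p : ℤ × ℤ × ℤ, if p.1 = a ∧ p.2.1 = b then dNBTW q p else 0)
        = dNBTWm1 q a * dNBTWm2 q b) ∧
    (∀ a b : ℤ, (∑ᶠ p : ℤ × ℤ × ℤ, if p.1 = a ∧ p.2.2 = b then dNBTW q p else 0)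
        = dNBTWm1 q a * dNBTWm3 q b) ∧
    (∀ a b : ℤ, (∑ᶠ p : ℤ × ℤ × ℤ, if p.2.1 = a ∧ p.2.2 = b then dNBTW q p else 0)
        = dNBTWm2 q a * dNBTWm3 q b) ∧
    (∑ᶠ p : ℤ × ℤ × ℤ, dNBTW q p * extPred nbtwPerm3 ![p.1, p.2.1, p.2.2])
      ≥ 1 - 3 / (q : ℝ) := by
  refine ⟨dNBTWm1_eq q, dNBTWm2_eq q, dNBTWm3_eq q, finsum_ite_fst_snd_dNBTW_eq_mul q,
    finsum_ite_fst_thd_dNBTW_eq_mul q, finsum_ite_snd_thd_dNBTW_eq_mul q, ?_⟩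
  refine le_trans ?_ (one_sub_inv_sq_le_finsum_dNBTW_mul_extPred (by omega))
  have hgap : (1 - 1 / (q : ℝ)) ^ 2 - (1 - 3 / q) = 1 / q + (1 / q) ^ 2 := by ring
  have : 0 ≤ 1 / (q : ℝ) + (1 / q) ^ 2 := by positivity
  linarith

end OCSPPaper
end
end

section
/- Let I = (X, C) be an ordering-CSP instance with predicate NBTW, where C is a finitely supported probability distribution over triples of pairwise distinct variables from the finite set X. Build an arc-weighted directed graph G whose vertex set is X together with two fresh vertices a_c, b_c for each triple c = (x,y,z) in the support of C, where each such triple contributes the six arcs b_c→x, x→a_c, a_c→z, z→b_c, b_c→y, y→a_c, each of weight C(c)/6. Then the maximum, over injective orderings O of the vertices of G into ℤ, of the total weight of arcs (u,v) with O(u) < O(v) equals (5/6)·val(I) + (4/6)·(1 − val(I)) = (4 + val(I))/6. -/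
open Classical Finset

noncomputable section
namespace OCSPPaper

/-- Value of an NBTW ordering-CSP instance `(X, C)`: the best, over injective orderings
`O : X → ℤ`, expected extended NBTW value of a random constraint. -/
noncomputable def nbtwVal {X : Type} [Fintype X] (C : X × X × X → ℝ) : ℝ :=
  ⨆ O : {O : X → ℤ // Function.Injective O},
    ∑ c : X × X × X, C c * extPred nbtwPerm3 ![O.1 c.1, O.1 c.2.1, O.1 c.2.2]

/-- Vertices of the gadget graph: the original variables together with two fresh vertices
`a_c` (tagged `true`) and `b_c` (tagged `false`) for each constraint in the support of `C`. -/
abbrev GadgetVerts (X : Type) (C : X × X × X → ℝ) : Type :=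
  X ⊕ ({c : X × X × X // C c ≠ 0} × Bool)

/-- The six arcs `b→x, x→a, a→z, z→b, b→y, y→a` of the MAS gadget of a constraint
`c = (x, y, z)`. -/
def gadgetArcsOf {X : Type} {C : X × X × X → ℝ} (c : {c : X × X × X // C c ≠ 0}) :
    List (GadgetVerts X C × GadgetVerts X C) :=
  let xv : GadgetVerts X C := Sum.inl c.1.1
  let yv : GadgetVerts X C := Sum.inl c.1.2.1
  let zv : GadgetVerts X C := Sum.inl c.1.2.2
  let av : GadgetVerts X C := Sum.inr (c, true)
  let bv : GadgetVerts X C := Sum.inr (c, false)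
  [(bv, xv), (xv, av), (av, zv), (zv, bv), (bv, yv), (yv, av)]

/-- The total weight of arcs of the gadget graph satisfied by the ordering `O`; each of the
six arcs of the gadget of a constraint `c` has weight `C(c)/6`. -/
noncomputable def gadgetWeight {X : Type} [Fintype X] (C : X × X × X → ℝ)
    (O : GadgetVerts X C → ℤ) : ℝ :=
  ∑ c : {c : X × X × X // C c ≠ 0},
    C c.1 / 6 * (((gadgetArcsOf c).filter fun p => decide (O p.1 < O p.2)).length : ℝ)

/-!
A gadget consists of the two directed 4-cycles `b → x → a → z → b` and `b → y → a → z → b`,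
which share the arcs `a → z → b`. Hence an ordering satisfies at most 5 of its 6 arcs, and
exactly 5 only if it keeps `b` below and `a` above both `x` and `y` and drops one of the shared
arcs, which puts `z` below `b` or above `a`, i.e. not between `x` and `y`. Conversely, placing
`b_c` just below and `a_c` just above both `x` and `y` in an optimal ordering of the variables
attains these bounds. Averaging over `C` gives `(4 + val I) / 6` on both sides.
-/

open Function

section Rank

variable {V α : Type*} [Fintype V] [LinearOrder α]

def rank (f : V → α) (v : V) : ℕ := #{w | f w < f v}

theorem rank_lt_rank_iff {f : V → α} {u v : V} : rank f u < rank f v ↔ f u < f v := by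
  constructor
  · intro h
    by_contra! hvu
    refine h.not_ge (card_le_card fun w hw => ?_)
    simp only [mem_filter, mem_univ, true_and] at hw ⊢
    exact hw.trans_le hvu
  · intro huv
    refine card_lt_card ⟨fun w hw => ?_, fun hsub => ?_⟩
    · simp only [mem_filter, mem_univ, true_and] at hw ⊢
      exact hw.trans huv
    · exact absurd (hsub (by simpa using huv)) (by simp)

theorem rank_injective {f : V → α} (hf : Injective f) : Injective (rank f) := fun _ _ h =>
  hf (le_antisymm (not_lt.mp fun hvu => (rank_lt_rank_iff.mpr hvu).ne' h)
    (not_lt.mp fun huv => (rank_lt_rank_iff.mpr huv).ne h))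

theorem rank_lt_card (f : V → α) (v : V) : rank f v < Fintype.card V :=
  card_lt_univ_of_notMem (x := v) (by simp)

theorem exists_injective_refinement (p : V → ℤ) :
    ∃ O : V → ℤ, Injective O ∧ ∀ u v, p u < p v → O u < O v := by
  let key : V → Lex (ℤ × Fin (Fintype.card V)) := fun v => toLex (p v, Fintype.equivFin V v)
  have hkey : Injective key := fun u v h =>
    (Fintype.equivFin V).injective (congrArg Prod.snd (toLex.injective h))
  refine ⟨fun v => rank key v, Nat.cast_injective.comp (rank_injective hkey), fun u v huv => ?_⟩
  exact Nat.cast_lt.mpr (rank_lt_rank_iff.mpr (Prod.Lex.toLex_lt_toLex.mpr (Or.inl huv)))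

end Rank

section Extension

instance {m : ℕ} (a : Fin m → ℤ) (σ : Equiv.Perm (Fin m)) : Decidable (compatiblePerm a σ) := by
  unfold compatiblePerm; infer_instance

theorem extPred_congr {m : ℕ} (P : Finset (Equiv.Perm (Fin m))) {a b : Fin m → ℤ}
    (h : ∀ i j, a i < a j ↔ b i < b j) : extPred P a = extPred P b := by
  have : compatiblePerm a = compatiblePerm b := by
    ext σ
    simp only [compatiblePerm, h]
  unfold extPred
  rw [this]

/-- `extPred` with the decidable instance above instead of the classical one, so that `decide`
can evaluate it. -/
theorem extPred_eq_div {m : ℕ} (P : Finset (Equiv.Perm (Fin m))) (a : Fin m → ℤ) :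
    extPred P a = (#{σ | compatiblePerm a σ ∧ σ ∈ P} : ℝ) / #{σ | compatiblePerm a σ} := by
  unfold extPred
  congr!

theorem card_compatiblePerm_perm3 (r : Equiv.Perm (Fin 3)) :
    #{σ | compatiblePerm (fun i => (r i : ℤ)) σ} = 1 ∧
      #{σ | compatiblePerm (fun i => (r i : ℤ)) σ ∧ σ ∈ nbtwPerm3} =
        if ((r 0 : ℤ) < r 2 ∨ (r 1 : ℤ) < r 2) ∧ ((r 2 : ℤ) < r 0 ∨ (r 2 : ℤ) < r 1) then 0
        else 1 := by
  revert r
  decide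

theorem extPred_nbtwPerm3 {u v w : ℤ} (huv : u ≠ v) (huw : u ≠ w) (hvw : v ≠ w) :
    extPred nbtwPerm3 ![u, v, w] = if w ∈ Set.uIoo u v then 0 else 1 := by
  set a : Fin 3 → ℤ := ![u, v, w]
  have ha : Injective a := by
    intro i j h
    fin_cases i <;> fin_cases j <;> simp_all [a, eq_comm]
  let r : Equiv.Perm (Fin 3) := Equiv.ofBijective (fun i => ⟨rank a i, rank_lt_card a i⟩)
    (Finite.injective_iff_bijective.mp fun i j h => rank_injective ha (congrArg Fin.val h))
  have hr : ∀ i j, a i < a j ↔ (r i : ℤ) < r j := fun i j => by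
    simp [r, rank_lt_rank_iff]
  obtain ⟨hcard, hcardP⟩ := card_compatiblePerm_perm3 r
  rw [extPred_congr _ hr, extPred_eq_div, hcard, hcardP]
  simp only [← hr, ← Set.Ioo_min_max, Set.mem_Ioo, min_lt_iff, lt_max_iff]
  split_ifs <;> simp_all [a]

end Extension

section Value

variable {X : Type} [Fintype X]

def objVal (C : X × X × X → ℝ) (O : X → ℤ) : ℝ :=
  ∑ c : X × X × X, C c * extPred nbtwPerm3 ![O c.1, O c.2.1, O c.2.2]

theorem objVal_congr (C : X × X × X → ℝ) {O O' : X → ℤ}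
    (h : ∀ x y, O x < O y ↔ O' x < O' y) : objVal C O = objVal C O' := by
  refine sum_congr rfl fun c _ => congrArg _ (extPred_congr _ fun i j => ?_)
  fin_cases i <;> fin_cases j <;> exact h _ _

theorem finite_range_objVal (C : X × X × X → ℝ) :
    (Set.range fun O : {O : X → ℤ // Injective O} => objVal C O.1).Finite := by
  refine (Set.finite_range fun r : X → Fin (Fintype.card X) =>
    objVal C fun x => (r x : ℤ)).subset ?_
  rintro _ ⟨O, rfl⟩
  refine ⟨fun x => ⟨rank O.1 x, rank_lt_card O.1 x⟩, objVal_congr C fun x y => ?_⟩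
  simp [rank_lt_rank_iff]

theorem objVal_le_nbtwVal (C : X × X × X → ℝ) {O : X → ℤ} (hO : Injective O) :
    objVal C O ≤ nbtwVal C :=
  le_ciSup (finite_range_objVal C).bddAbove (⟨O, hO⟩ : {O : X → ℤ // Injective O})

theorem exists_objVal_eq_nbtwVal (C : X × X × X → ℝ) :
    ∃ O : X → ℤ, Injective O ∧ objVal C O = nbtwVal C := by
  have : Nonempty {O : X → ℤ // Injective O} :=
    ⟨⟨fun x => (Fintype.equivFin X x : ℤ),
      Nat.cast_injective.comp (Fin.val_injective.comp (Fintype.equivFin X).injective)⟩⟩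
  obtain ⟨O, hO⟩ := (Set.range_nonempty _).csSup_mem (finite_range_objVal C)
  exact ⟨O.1, O.2, hO⟩

end Value

section Gadget

variable {X : Type} {C : X × X × X → ℝ}

/-- The number of satisfied arcs of a gadget whose vertices `b, x, a, z, y` sit at the given
positions. -/
def gadgetCount (b x a z y : ℤ) : ℕ :=
  [(b, x), (x, a), (a, z), (z, b), (b, y), (y, a)].countP fun e => e.1 < e.2

theorem gadgetCount_le (b x a z y : ℤ) :
    gadgetCount b x a z y ≤ if z ∈ Set.uIoo x y then 4 else 5 := by
  rw [← Set.Ioo_min_max, Set.mem_Ioo]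
  simp only [gadgetCount, List.countP_cons, List.countP_nil, decide_eq_true_eq]
  split_ifs <;> omega

theorem gadgetCount_of_surround {x y z : ℤ} (hxz : x ≠ z) (hyz : y ≠ z) :
    gadgetCount (2 * min x y - 1) (2 * x) (2 * max x y + 1) (2 * z) (2 * y) =
      if z ∈ Set.uIoo x y then 4 else 5 := by
  rw [← Set.Ioo_min_max, Set.mem_Ioo]
  simp only [gadgetCount, List.countP_cons, List.countP_nil, decide_eq_true_eq]
  split_ifs <;> omega

theorem cast_ite_four_five (p : Prop) [Decidable p] :
    ((if p then 4 else 5 : ℕ) : ℝ) = 4 + if p then 0 else 1 := by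
  split_ifs <;> norm_num

/-- Doubling makes variables and fresh vertices differ in parity, so the endpoints of every arc
get distinct positions. -/
def gadgetPosition (C : X × X × X → ℝ) (O₀ : X → ℤ) : GadgetVerts X C → ℤ
  | .inl x => 2 * O₀ x
  | .inr (c, true) => 2 * max (O₀ c.1.1) (O₀ c.1.2.1) + 1
  | .inr (c, false) => 2 * min (O₀ c.1.1) (O₀ c.1.2.1) - 1

theorem gadgetPosition_ne (O₀ : X → ℤ) (c : {c : X × X × X // C c ≠ 0}) :
    ∀ e ∈ gadgetArcsOf c, gadgetPosition C O₀ e.1 ≠ gadgetPosition C O₀ e.2 := by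
  simp only [gadgetArcsOf, List.mem_cons, List.not_mem_nil, or_false]
  rintro e (rfl | rfl | rfl | rfl | rfl | rfl) <;> simp only [gadgetPosition] <;> omega

variable [Fintype X]

theorem gadgetWeight_eq_sum (O : GadgetVerts X C → ℤ) :
    gadgetWeight C O = ∑ c : {c : X × X × X // C c ≠ 0}, C c.1 / 6 *
      (gadgetCount (O (.inr (c, false))) (O (.inl c.1.1)) (O (.inr (c, true)))
        (O (.inl c.1.2.2)) (O (.inl c.1.2.1)) : ℝ) := by
  simp only [gadgetWeight, gadgetCount, ← List.countP_eq_length_filter]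
  rfl

theorem gadgetWeight_congr {O O' : GadgetVerts X C → ℤ}
    (h : ∀ c, ∀ e ∈ gadgetArcsOf c, O e.1 < O e.2 ↔ O' e.1 < O' e.2) :
    gadgetWeight C O = gadgetWeight C O' := by
  refine sum_congr rfl fun c _ => ?_
  rw [List.filter_congr fun e he => decide_eq_decide.mpr (h c e he)]

theorem sum_support_mul (f : X × X × X → ℝ) :
    ∑ c : {c : X × X × X // C c ≠ 0}, C c.1 * f c.1 = ∑ c, C c * f c := by
  rw [← sum_filter_of_ne (p := fun c => C c ≠ 0) fun c _ hc h => hc (by rw [h, zero_mul])]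
  exact (sum_subtype _ (by simp) fun c => C c * f c).symm

theorem sum_support_div_six (hsum : ∑ c, C c = 1) (E : X × X × X → ℝ) :
    ∑ c : {c : X × X × X // C c ≠ 0}, C c.1 / 6 * (4 + E c.1) = (4 + ∑ c, C c * E c) / 6 := by
  have := sum_support_mul (C := C) fun c => (4 + E c) / 6
  simp only [mul_div_assoc', div_mul_eq_mul_div] at this ⊢
  rw [this, ← sum_div]
  simp only [mul_add, sum_add_distrib, ← sum_mul, hsum]
  ring

theorem gadgetWeight_le (hnn : ∀ c, 0 ≤ C c) (hsum : ∑ c, C c = 1)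
    (hdistinct : ∀ c : X × X × X, C c ≠ 0 → c.1 ≠ c.2.1 ∧ c.1 ≠ c.2.2 ∧ c.2.1 ≠ c.2.2)
    {O : GadgetVerts X C → ℤ} (hO : Injective O) :
    gadgetWeight C O ≤ (4 + objVal C (O ∘ Sum.inl)) / 6 := by
  rw [gadgetWeight_eq_sum, objVal, ← sum_support_div_six hsum]
  refine sum_le_sum fun c _ => mul_le_mul_of_nonneg_left ?_ (div_nonneg (hnn c) (by norm_num))
  obtain ⟨hxy, hxz, hyz⟩ := hdistinct c c.2
  have hinl := hO.comp Sum.inl_injective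
  rw [extPred_nbtwPerm3 (hinl.ne hxy) (hinl.ne hxz) (hinl.ne hyz), ← cast_ite_four_five]
  exact_mod_cast gadgetCount_le ..

theorem gadgetWeight_gadgetPosition (hsum : ∑ c, C c = 1)
    (hdistinct : ∀ c : X × X × X, C c ≠ 0 → c.1 ≠ c.2.1 ∧ c.1 ≠ c.2.2 ∧ c.2.1 ≠ c.2.2)
    {O₀ : X → ℤ} (hO₀ : Injective O₀) :
    gadgetWeight C (gadgetPosition C O₀) = (4 + objVal C O₀) / 6 := by
  rw [gadgetWeight_eq_sum, objVal, ← sum_support_div_six hsum]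
  refine sum_congr rfl fun c _ => congrArg _ ?_
  obtain ⟨hxy, hxz, hyz⟩ := hdistinct c c.2
  rw [extPred_nbtwPerm3 (hO₀.ne hxy) (hO₀.ne hxz) (hO₀.ne hyz), ← cast_ite_four_five,
    ← gadgetCount_of_surround (hO₀.ne hxz) (hO₀.ne hyz)]
  rfl

theorem gadgetWeight_eq_of_refines {O₀ : X → ℤ} {O : GadgetVerts X C → ℤ}
    (hO : ∀ u v, gadgetPosition C O₀ u < gadgetPosition C O₀ v → O u < O v) :
    gadgetWeight C O = gadgetWeight C (gadgetPosition C O₀) := by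
  refine gadgetWeight_congr fun c e he => ⟨fun h => ?_, hO _ _⟩
  rcases (gadgetPosition_ne O₀ c e he).lt_or_gt with hlt | hgt
  · exact hlt
  · exact absurd h (hO _ _ hgt).asymm

end Gadget

theorem mas_reduction_general (X : Type) [Fintype X]
    (C : X × X × X → ℝ)
    (hnn : ∀ c, 0 ≤ C c) (hsum : ∑ c : X × X × X, C c = 1)
    (hdistinct : ∀ c : X × X × X, C c ≠ 0 →
      c.1 ≠ c.2.1 ∧ c.1 ≠ c.2.2 ∧ c.2.1 ≠ c.2.2) :
    IsGreatest {w : ℝ | ∃ O : GadgetVerts X C → ℤ, Function.Injective O ∧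
        w = gadgetWeight C O}
      ((4 + nbtwVal C) / 6) := by
  constructor
  · obtain ⟨O₀, hO₀, hval⟩ := exists_objVal_eq_nbtwVal C
    obtain ⟨O, hO, hrefine⟩ := exists_injective_refinement (gadgetPosition C O₀)
    refine ⟨O, hO, ?_⟩
    rw [gadgetWeight_eq_of_refines hrefine, gadgetWeight_gadgetPosition hsum hdistinct hO₀, hval]
  · rintro w ⟨O, hO, rfl⟩
    have := objVal_le_nbtwVal C (hO.comp Sum.inl_injective)
    linarith [gadgetWeight_le hnn hsum hdistinct hO]

/-- the gadget reduction from Max-NBTW to MAS.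
The maximum over injective orderings of the total satisfied arc weight of the gadget graph
equals `(5/6)·val(I) + (4/6)·(1 − val(I)) = (4 + val(I))/6`. -/
theorem mas_reduction (X : Type) [Fintype X] (hX : Nonempty X)
    (C : X × X × X → ℝ)
    (hnn : ∀ c, 0 ≤ C c) (hsum : ∑ c : X × X × X, C c = 1)
    (hdistinct : ∀ c : X × X × X, C c ≠ 0 →
      c.1 ≠ c.2.1 ∧ c.1 ≠ c.2.2 ∧ c.2.1 ≠ c.2.2) :
    IsGreatest {w : ℝ | ∃ O : GadgetVerts X C → ℤ, Function.Injective O ∧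
        w = gadgetWeight C O}
      ((4 + nbtwVal C) / 6) :=
  mas_reduction_general X C hnn hsum hdistinct

end OCSPPaper
end
end
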